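/- arXiv:1509.04222 — 4 statements merged into one kernel-verified Lean document; each statement's English description precedes it below -/
import Mathlib

section
/- Let P be a partial order, and for each i in a countable index set let P ∪ {aᵢ} be a partial order extending P by the single new element aᵢ. Define a relation ≤' on P ∪ {a₀, a₁, …} extending all the given relations by setting aᵢ ≤' aⱼ (for i ≠ j) if and only if there exists p ∈ P with aᵢ ≤ p and p ≤ aⱼ. Then ≤' is a partial order. -/
/-- The base relation on `P ⊕ ι`, where each `aᵢ` (encoded `Sum.inr i`) extends the
partial order `P` by one new point, with `U i = {p | p ≤ aᵢ}` and `D i = {p | aᵢ ≤ p}`. -/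
def extRel' {P : Type*} [PartialOrder P] {ι : Type*} (U D : ι → Set P) :
    P ⊕ ι → P ⊕ ι → Prop
  | Sum.inl p, Sum.inl q => p ≤ q
  | Sum.inl p, Sum.inr i => p ∈ U i
  | Sum.inr i, Sum.inl p => p ∈ D i
  | Sum.inr i, Sum.inr j => i = j ∨ ∃ p, p ∈ D i ∧ p ∈ U j

/-- The relation `≤'` on `P ∪ {a₀, a₁, …}` extending all one-point extensions, with
`aᵢ ≤' aⱼ` iff there is `p ∈ P` with `aᵢ ≤ p ≤ aⱼ`, is a partial order. -/
theorem extension_isPartialOrder {P : Type*} [PartialOrder P] {ι : Type*}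
    (U D : ι → Set P)
    (hU : ∀ i p q, p ≤ q → q ∈ U i → p ∈ U i)
    (hD : ∀ i p q, p ∈ D i → p ≤ q → q ∈ D i)
    (hUD : ∀ i p q, p ∈ U i → q ∈ D i → p ≤ q)
    (hdisj : ∀ i p, ¬ (p ∈ U i ∧ p ∈ D i)) :
    IsPartialOrder (P ⊕ ι) (extRel' U D) := by
  refine { refl := ?_, trans := ?_, antisymm := ?_ }
  · rintro (p | i)
    · exact le_refl p
    · exact Or.inl rfl
  · rintro (p | i) (q | j) (r | k) hab hbc
    · exact le_trans hab hbc
    · exact hU _ _ _ hab hbc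
    · exact hUD _ _ _ hab hbc
    · rcases hbc with rfl | ⟨q, hq1, hq2⟩
      · exact hab
      · exact hU _ _ _ (hUD _ _ _ hab hq1) hq2
    · exact hD _ _ _ hab hbc
    · exact Or.inr ⟨q, hab, hbc⟩
    · rcases hab with rfl | ⟨q, hq1, hq2⟩
      · exact hbc
      · exact hD _ _ _ hq1 (hUD _ _ _ hq2 hbc)
    · rcases hab with rfl | ⟨p, hp1, hp2⟩
      · exact hbc
      · rcases hbc with rfl | ⟨q, hq1, hq2⟩
        · exact Or.inr ⟨p, hp1, hp2⟩
        · exact Or.inr ⟨p, hp1, hU _ _ _ (hUD _ _ _ hp2 hq1) hq2⟩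
  · rintro (p | i) (q | j) hab hba
    · exact congrArg Sum.inl (le_antisymm hab hba)
    · exact absurd ⟨hab, hba⟩ (hdisj j p)
    · exact absurd ⟨hba, hab⟩ (hdisj i q)
    · rcases hab with rfl | ⟨p, hp1, hp2⟩
      · rfl
      · rcases hba with rfl | ⟨q, hq1, hq2⟩
        · rfl
        · have : p = q := le_antisymm (hUD j p q hp2 hq1) (hUD i q p hq2 hp1)
          subst this
          exact absurd ⟨hp2, hq1⟩ (hdisj j p)
end

section
/- Let G be a complete multipartite digraph satisfying the parity property, and let A, B be two maximal antichains of G such that some x₀ ∈ A and y₀ ∈ B satisfy x₀ → y₀. Define R = {x ∈ A : x → y₀} and S = {y ∈ B : x₀ → y}. Then for every x ∈ A and y ∈ B, x → y if and only if (x ∈ R ↔ y ∈ S). -/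
/-- `x` and `y` are incomparable (non-adjacent and distinct) in the digraph `E`. -/
def Perp {V : Type*} (E : V → V → Prop) (x y : V) : Prop :=
  x ≠ y ∧ ¬ E x y ∧ ¬ E y x

/-- `x` and `y` are equal or non-adjacent. -/
def Sim {V : Type*} (E : V → V → Prop) (x y : V) : Prop :=
  x = y ∨ Perp E x y

/-- A digraph: an irreflexive relation with at most one edge between two points. -/
def IsDigraph {V : Type*} (E : V → V → Prop) : Prop :=
  (∀ x, ¬ E x x) ∧ ∀ x y, ¬ (E x y ∧ E y x)

/-- A digraph is complete multipartite if `Sim E` is an equivalence relation, i.e.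
non-adjacency-or-equality is an equivalence; equivalently, any two vertices in
different classes are joined by an edge in exactly one direction. -/
def CompleteMultipartite {V : Type*} (E : V → V → Prop) : Prop :=
  Equivalence (Sim E) ∧ ∀ x y, ¬ Sim E x y → E x y ∨ E y x

/-- The maximal antichains of a complete multipartite digraph are the `Sim`-classes. -/
def MaxAntichain {V : Type*} (E : V → V → Prop) (A : Set V) : Prop :=
  ∃ v, A = {w | Sim E v w}

/-- The parity property: for every two maximal antichains `A, B`, distinct `a, a' ∈ A`
and distinct `b, b' ∈ B`, the number of edges from `{a, a'}` to `{b, b'}` is even. -/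
def ParityProp {V : Type*} (E : V → V → Prop) : Prop :=
  ∀ A B : Set V, MaxAntichain E A → MaxAntichain E B → A ≠ B →
    ∀ a a' b b', a ∈ A → a' ∈ A → b ∈ B → b' ∈ B → a ≠ a' → b ≠ b' →
      Even (Set.ncard {p : V × V |
        (p.1 = a ∨ p.1 = a') ∧ (p.2 = b ∨ p.2 = b') ∧ E p.1 p.2})

open scoped Classical in
lemma card_aux {V : Type*} (E : V → V → Prop) (x x' y y' : V) (hx : x ≠ x') (hy : y ≠ y') :
    Set.ncard {p : V × V | (p.1 = x ∨ p.1 = x') ∧ (p.2 = y ∨ p.2 = y') ∧ E p.1 p.2} =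
    (if E x y then 1 else 0) + (if E x y' then 1 else 0) +
    (if E x' y then 1 else 0) + (if E x' y' then 1 else 0) := by
  classical
  have hset : {p : V × V | (p.1 = x ∨ p.1 = x') ∧ (p.2 = y ∨ p.2 = y') ∧ E p.1 p.2} =
      ↑(({(x,y),(x,y'),(x',y),(x',y')} : Finset (V × V)).filter fun p => E p.1 p.2) := by
    ext ⟨a, b⟩
    simp only [Set.mem_setOf_eq, Finset.coe_filter, Finset.mem_insert, Finset.mem_singleton,
      Prod.mk.injEq]
    tauto
  rw [hset, Set.ncard_coe_finset, Finset.card_filter]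
  rw [Finset.sum_insert (by simp [Prod.ext_iff, hx, hy]),
      Finset.sum_insert (by simp [Prod.ext_iff, hx, hy]),
      Finset.sum_insert (by simp [Prod.ext_iff, hx, hy]),
      Finset.sum_singleton]
  simp only []
  omega

/-- Structure lemma (explicit form): if `x₀ ∈ A`, `y₀ ∈ B` with `x₀ → y₀`, then with
`R = {x ∈ A | x → y₀}` and `S = {y ∈ B | x₀ → y}`, for all `x ∈ A`, `y ∈ B` we have
`x → y` iff (`x ∈ R` ↔ `y ∈ S`). -/
theorem semigeneric_structure_explicit {V : Type*} (E : V → V → Prop)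
    (hG : IsDigraph E) (hcm : CompleteMultipartite E) (hpar : ParityProp E)
    (A B : Set V) (hA : MaxAntichain E A) (hB : MaxAntichain E B)
    (x₀ y₀ : V) (hx₀ : x₀ ∈ A) (hy₀ : y₀ ∈ B) (h0 : E x₀ y₀) :
    ∀ x ∈ A, ∀ y ∈ B,
      (E x y ↔ (x ∈ {x ∈ A | E x y₀} ↔ y ∈ {y ∈ B | E x₀ y})) := by
  obtain ⟨hequiv, hedge⟩ := hcm
  obtain ⟨u, hu⟩ := hA
  obtain ⟨v, hv⟩ := hB
  -- any two members of A are Sim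
  have hsimA : ∀ a ∈ A, ∀ a' ∈ A, Sim E a a' := by
    intro a ha a' ha'
    rw [hu] at ha ha'
    exact hequiv.trans (hequiv.symm ha) ha'
  have hsimB : ∀ b ∈ B, ∀ b' ∈ B, Sim E b b' := by
    intro b hb b' hb'
    rw [hv] at hb hb'
    exact hequiv.trans (hequiv.symm hb) hb'
  have hnsim : ¬ Sim E x₀ y₀ := by
    rintro (rfl | ⟨-, hne, -⟩)
    · exact hG.1 _ h0
    · exact hne h0
  have hAB : A ≠ B := by
    intro h
    exact hnsim (hsimA x₀ hx₀ y₀ (h ▸ hy₀))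
  intro x hx y hy
  simp only [Set.mem_setOf_eq, hx, hy, true_and]
  by_cases hxx : x = x₀
  · subst hxx
    tauto
  by_cases hyy : y = y₀
  · subst hyy
    tauto
  have hEven := hpar A B ⟨u, hu⟩ ⟨v, hv⟩ hAB x x₀ y y₀ hx hx₀ hy hy₀ hxx hyy
  rw [card_aux E x x₀ y y₀ hxx hyy, if_pos h0] at hEven
  by_cases h1 : E x y <;> by_cases h2 : E x y₀ <;> by_cases h3 : E x₀ y <;>
    simp [h1, h2, h3, Nat.even_iff] at hEven ⊢
end

section
/- Let G be a complete multipartite digraph with the parity property and let A, B be two maximal antichains of G. Then there exist subsets R ⊆ A and S ⊆ B such that for all x ∈ A and y ∈ B, x → y if and only if (x ∈ R ↔ y ∈ S). -/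
attribute [local instance] Classical.propDecidable

/-- The number of edges between two pairs, as a sum of indicators. -/
lemma ncard_pairs {V : Type*} (E : V → V → Prop) (a a' b b' : V)
    (ha : a ≠ a') (hb : b ≠ b') :
    Set.ncard {p : V × V | (p.1 = a ∨ p.1 = a') ∧ (p.2 = b ∨ p.2 = b') ∧ E p.1 p.2}
      = (if E a b then 1 else 0) + (if E a b' then 1 else 0)
        + (if E a' b then 1 else 0) + (if E a' b' then 1 else 0) := by
  classical
  have hset : {p : V × V | (p.1 = a ∨ p.1 = a') ∧ (p.2 = b ∨ p.2 = b') ∧ E p.1 p.2}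
      = ↑((({a, a'} : Finset V) ×ˢ ({b, b'} : Finset V)).filter fun p => E p.1 p.2) := by
    ext p
    simp [Finset.mem_filter, Finset.mem_product, and_assoc]
  rw [hset, Set.ncard_coe_finset, Finset.card_filter, Finset.sum_product,
    Finset.sum_pair ha, Finset.sum_pair hb, Finset.sum_pair hb]
  ring

/-- Structure lemma: for maximal antichains `A ≠ B` of a complete multipartite digraph
with the parity property, there are `R ⊆ A` and `S ⊆ B` such that for `x ∈ A`, `y ∈ B`,
`x → y` iff (`x ∈ R` ↔ `y ∈ S`). -/
theorem semigeneric_structure {V : Type*} (E : V → V → Prop)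
    (hG : IsDigraph E) (hcm : CompleteMultipartite E) (hpar : ParityProp E)
    (A B : Set V) (hA : MaxAntichain E A) (hB : MaxAntichain E B) (hAB : A ≠ B) :
    ∃ R S : Set V, R ⊆ A ∧ S ⊆ B ∧
      ∀ x ∈ A, ∀ y ∈ B, (E x y ↔ (x ∈ R ↔ y ∈ S)) := by
  classical
  obtain ⟨a₀, hAeq⟩ := hA
  obtain ⟨b₀, hBeq⟩ := hB
  have hA : MaxAntichain E A := ⟨a₀, hAeq⟩
  have hB : MaxAntichain E B := ⟨b₀, hBeq⟩
  have ha₀ : a₀ ∈ A := by rw [hAeq]; exact hcm.1.refl a₀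
  have hb₀ : b₀ ∈ B := by rw [hBeq]; exact hcm.1.refl b₀
  -- vertices of A and B are never Sim-related
  have hdisj : ∀ x ∈ A, ∀ y ∈ B, ¬ Sim E x y := by
    intro x hx y hy hsim
    rw [hAeq] at hx
    rw [hBeq] at hy
    apply hAB
    rw [hAeq, hBeq]
    have hab : Sim E a₀ b₀ := hcm.1.trans (hcm.1.trans hx hsim) (hcm.1.symm hy)
    ext w
    exact ⟨fun h => hcm.1.trans (hcm.1.symm hab) h, fun h => hcm.1.trans hab h⟩
  -- distinctness
  have hne : ∀ x ∈ A, ∀ y ∈ B, x ≠ y := by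
    intro x hx y hy h
    exact hdisj x hx y hy (Or.inl h)
  refine ⟨{x | x ∈ A ∧ (E x b₀ ↔ E a₀ b₀)}, {y | y ∈ B ∧ E a₀ y},
    fun x hx => hx.1, fun y hy => hy.1, ?_⟩
  intro x hx y hy
  simp only [Set.mem_setOf_eq, hx, hy, true_and]
  by_cases hxa : x = a₀
  · subst hxa; tauto
  by_cases hyb : y = b₀
  · subst hyb; tauto
  have hp := hpar A B hA hB hAB a₀ x b₀ y ha₀ hx hb₀ hy (Ne.symm hxa) (Ne.symm hyb)
  rw [ncard_pairs E a₀ x b₀ y (Ne.symm hxa) (Ne.symm hyb)] at hp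
  by_cases h1 : E a₀ b₀ <;> by_cases h2 : E a₀ y <;> by_cases h3 : E x b₀ <;>
    by_cases h4 : E x y <;>
    simp only [h1, h2, h3, h4, if_true, if_false] at hp ⊢ <;>
    first
      | exact absurd hp (by decide)
      | tauto
end

section
/- Let G be a countable complete multipartite digraph with the parity property that is existentially closed (generic) for this class, and let φ be an automorphism of G fixing every maximal antichain setwise. Then φ²(a) = a for all a ∈ G. -/
/-- In the semigeneric complete multipartite digraph, if an automorphism `φ` fixes
every maximal antichain setwise, then `φ² = id`: for `a` with `φ a ≠ a` and
`φ (φ a) ≠ a` the genericity of the digraph yields a contradiction.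
Genericity is abstracted as: for finite disjoint `X, Y` contained in a maximal
antichain `A`, there is a vertex `y₀ ∉ A` with an edge `x → y₀` for all `x ∈ X`
and `y₀ → x` for all `x ∈ Y` (so `X ⊆ R_{AB}` and `Y ⊆ A ∖ R_{AB}` where `B` is the
maximal antichain of `y₀`). -/
theorem semigeneric_setwise_fixing_involutive {V : Type*} (E : V → V → Prop)
    (hG : IsDigraph E) (hcm : CompleteMultipartite E) (hpar : ParityProp E)
    (hgen : ∀ A : Set V, MaxAntichain E A → ∀ X Y : Finset V,
      ↑X ⊆ A → ↑Y ⊆ A → Disjoint X Y →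
      ∃ y₀, y₀ ∉ A ∧ (∀ x ∈ X, E x y₀) ∧ ∀ x ∈ Y, E y₀ x)
    (φ : V ≃ V) (hφ : ∀ x y, E x y ↔ E (φ x) (φ y))
    (hfix : ∀ x, Sim E x (φ x)) :
    ∀ a : V, φ (φ a) = a := by
  classical
  intro a
  by_contra hne2
  have h1 : φ a ≠ a := by
    intro h
    exact hne2 (by rw [h, h])
  have h2 : φ (φ a) ≠ φ a := fun h => h1 (φ.injective h)
  have hne_afa2 : a ≠ φ (φ a) := fun h => hne2 h.symm
  set A : Set V := {w | Sim E a w} with hAdef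
  have hA : MaxAntichain E A := ⟨a, rfl⟩
  have haA : a ∈ A := Or.inl rfl
  have hfaA : φ a ∈ A := hfix a
  have hffaA : φ (φ a) ∈ A := hcm.1.trans (hfix a) (hfix (φ a))
  obtain ⟨y₀, hyA, hX, hY⟩ := hgen A hA {a, φ a} {φ (φ a)}
    (by
      intro x hx
      simp only [Finset.coe_insert, Finset.coe_singleton, Set.mem_insert_iff,
        Set.mem_singleton_iff] at hx
      rcases hx with rfl | rfl
      · exact haA
      · exact hfaA)
    (by
      intro x hx
      simp only [Finset.coe_singleton, Set.mem_singleton_iff] at hx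
      subst hx; exact hffaA)
    (by
      simp only [Finset.disjoint_singleton_right, Finset.mem_insert,
        Finset.mem_singleton]
      push_neg
      exact ⟨fun h => hne2 h, fun h => h2 h⟩)
  have e1 : E a y₀ := hX a (by simp)
  have e2 : E (φ a) y₀ := hX (φ a) (by simp)
  have e3 : E y₀ (φ (φ a)) := hY (φ (φ a)) (by simp)
  have e4 : E (φ a) (φ y₀) := (hφ a y₀).mp e1
  have e5 : E (φ (φ a)) (φ y₀) := (hφ (φ a) y₀).mp e2
  have hyne : y₀ ≠ φ y₀ := by
    intro h
    rw [← h] at e5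
    exact hG.2 y₀ (φ (φ a)) ⟨e3, e5⟩
  set B : Set V := {w | Sim E y₀ w} with hBdef
  have hB : MaxAntichain E B := ⟨y₀, rfl⟩
  have hy0B : y₀ ∈ B := Or.inl rfl
  have hfy0B : φ y₀ ∈ B := hfix y₀
  have hAB : A ≠ B := by
    intro h
    apply hyA
    rw [h]
    exact hy0B
  have hnE : ¬ E (φ (φ a)) y₀ := fun h => hG.2 y₀ (φ (φ a)) ⟨e3, h⟩
  -- Step 1: ¬ E a (φ y₀)
  have h6 : ¬ E a (φ y₀) := by
    intro h
    have hp := hpar A B hA hB hAB a (φ (φ a)) y₀ (φ y₀) haA hffaA hy0B hfy0B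
      hne_afa2 hyne
    have hset : {p : V × V | (p.1 = a ∨ p.1 = φ (φ a)) ∧ (p.2 = y₀ ∨ p.2 = φ y₀)
        ∧ E p.1 p.2}
        = ({(a, y₀), (a, φ y₀), (φ (φ a), φ y₀)} : Set (V × V)) := by
      ext ⟨x, y⟩
      simp only [Set.mem_setOf_eq, Set.mem_insert_iff, Set.mem_singleton_iff,
        Prod.mk.injEq]
      constructor
      · rintro ⟨(rfl | rfl), (rfl | rfl), he⟩
        · tauto
        · tauto
        · exact absurd he hnE
        · tauto
      · rintro (⟨rfl, rfl⟩ | ⟨rfl, rfl⟩ | ⟨rfl, rfl⟩)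
        · exact ⟨Or.inl rfl, Or.inl rfl, e1⟩
        · exact ⟨Or.inl rfl, Or.inr rfl, h⟩
        · exact ⟨Or.inr rfl, Or.inr rfl, e5⟩
    rw [hset] at hp
    rw [Set.ncard_insert_of_notMem (by simp [hyne, hne_afa2]),
      Set.ncard_insert_of_notMem (by simp [hne_afa2]),
      Set.ncard_singleton] at hp
    exact (by decide : ¬ Even 3) hp
  -- Step 2: parity on {a, φ a} × {y₀, φ y₀} gives an odd count, contradiction
  have hp := hpar A B hA hB hAB a (φ a) y₀ (φ y₀) haA hfaA hy0B hfy0B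
    (Ne.symm h1) hyne
  have hset : {p : V × V | (p.1 = a ∨ p.1 = φ a) ∧ (p.2 = y₀ ∨ p.2 = φ y₀)
      ∧ E p.1 p.2}
      = ({(a, y₀), (φ a, y₀), (φ a, φ y₀)} : Set (V × V)) := by
    ext ⟨x, y⟩
    simp only [Set.mem_setOf_eq, Set.mem_insert_iff, Set.mem_singleton_iff,
      Prod.mk.injEq]
    constructor
    · rintro ⟨(rfl | rfl), (rfl | rfl), he⟩
      · tauto
      · exact absurd he h6
      · tauto
      · tauto
    · rintro (⟨rfl, rfl⟩ | ⟨rfl, rfl⟩ | ⟨rfl, rfl⟩)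
      · exact ⟨Or.inl rfl, Or.inl rfl, e1⟩
      · exact ⟨Or.inr rfl, Or.inl rfl, e2⟩
      · exact ⟨Or.inr rfl, Or.inr rfl, e4⟩
  rw [hset] at hp
  rw [Set.ncard_insert_of_notMem (by simp [hyne, Ne.symm h1]),
    Set.ncard_insert_of_notMem (by simp [hyne]),
    Set.ncard_singleton] at hp
  exact (by decide : ¬ Even 3) hp
end
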